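/- arXiv:1207.4219 — 4 statements merged into one kernel-verified Lean document; each statement's English description precedes it below -/
import Mathlib

section
/- For any two vertices i and j of the infinite distance graph D(1,t) with t ≥ 2 and j ≥ i, the graph distance satisfies d(i,j) ≤ (j - i + (t+1)(t-1)/2) / t, i.e., t·d(i,j) ≤ j - i + ⌈t/2⌉·(t-1). -/
/-!
Write `j - i = q t + r` with `0 ≤ r < t` and let `c = ⌈t/2⌉`. Walking `q` steps of length
`t` and then `r` unit steps gives `t d ≤ (j - i) + r (t - 1)`, which suffices when `r ≤ c`.
Otherwise overshoot with `q + 1` steps of length `t` and walk back `t - r < t - c` unit steps;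
this gives `t d ≤ (j - i) + (t - r)(t + 1)`, and `(t - c - 1)(t + 1) ≤ c (t - 1)` as `t ≤ 2c`.
-/

/-- The infinite distance graph on `ℤ` with distance set `D`: distinct integers
`i, j` are adjacent iff `|i - j| ∈ D`. -/
def distGraph (D : Set ℤ) : SimpleGraph ℤ where
  Adj i j := i ≠ j ∧ |i - j| ∈ D
  symm := by
    constructor
    intro i j h
    exact ⟨h.1.symm, by rw [abs_sub_comm]; exact h.2⟩
  loopless := by
    constructor
    intro i h
    exact h.1 rfl

namespace SimpleGraph

theorem edist_add_nsmul_le {α : Type*} [AddMonoid α] {G : SimpleGraph α} {s : α}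
    (h : ∀ x, G.Adj x (x + s)) (x : α) (n : ℕ) : G.edist x (x + n • s) ≤ n := by
  induction n with
  | zero => simp
  | succ n ih =>
    calc G.edist x (x + (n + 1) • s)
        ≤ G.edist x (x + n • s) + G.edist (x + n • s) (x + n • s + s) := by
          rw [succ_nsmul, ← add_assoc]; exact G.edist_triangle
      _ ≤ n + 1 := add_le_add ih (edist_eq_one_iff_adj.mpr (h _)).le
      _ = ↑(n + 1) := by push_cast; rfl

theorem edist_le_natAbs_sub {G : SimpleGraph ℤ} (h : ∀ x, G.Adj x (x + 1)) (x y : ℤ) :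
    G.edist x y ≤ (y - x).natAbs := by
  wlog hxy : x ≤ y generalizing x y
  · rw [edist_comm, ← Int.natAbs_neg, neg_sub]
    exact this y x (by omega)
  have := edist_add_nsmul_le h x (y - x).natAbs
  rwa [nsmul_one, Int.natCast_natAbs, abs_of_nonneg (sub_nonneg.2 hxy), add_sub_cancel] at this

end SimpleGraph

theorem distGraph_adj_add {D : Set ℤ} {s : ℤ} (hs : s ≠ 0) (hsD : |s| ∈ D) (x : ℤ) :
    (distGraph D).Adj x (x + s) :=
  ⟨by omega, by rwa [sub_add_cancel_left, abs_neg]⟩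

theorem distGraph_one_dist_le {t : ℤ} (ht : 0 < t) (a : ℕ) (x y : ℤ) :
    ((distGraph {1, t}).dist x y : ℤ) ≤ a + |y - (x + a * t)| := by
  have hstep (s : ℤ) (hs : s = 1 ∨ s = t) (z : ℤ) : (distGraph {1, t}).Adj z (z + s) :=
    distGraph_adj_add (by omega) (by rcases hs with rfl | rfl <;> simp [abs_of_pos ht]) z
  have hedist : (distGraph {1, t}).edist x y ≤ a + (y - (x + a * t)).natAbs :=
    calc (distGraph {1, t}).edist x y
        ≤ (distGraph {1, t}).edist x (x + a • t) + (distGraph {1, t}).edist (x + a • t) y :=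
          SimpleGraph.edist_triangle
      _ ≤ a + (y - (x + a * t)).natAbs := by
          gcongr
          · exact SimpleGraph.edist_add_nsmul_le (hstep t (.inr rfl)) x a
          · simpa using SimpleGraph.edist_le_natAbs_sub (hstep 1 (.inl rfl)) _ y
  have := ENat.toNat_le_of_le_natCast (by exact_mod_cast hedist)
  rw [← Int.natCast_natAbs]
  exact_mod_cast this

theorem exists_mul_add_abs_sub_le {t n c : ℤ} (ht : 0 < t) (hn : 0 ≤ n) (hc : t ≤ 2 * c) :
    ∃ a : ℕ, t * (a + |n - a * t|) ≤ n + c * (t - 1) := by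
  have hdiv : n = n / t * t + n % t := (Int.ediv_mul_add_emod n t).symm
  have hr0 : 0 ≤ n % t := Int.emod_nonneg _ ht.ne'
  have hrt : n % t < t := Int.emod_lt_of_pos _ ht
  obtain ⟨q, hq⟩ : ∃ q : ℕ, (q : ℤ) = n / t :=
    ⟨(n / t).toNat, Int.toNat_of_nonneg (by positivity)⟩
  rw [← hq] at hdiv
  set r := n % t
  rcases le_or_gt r c with hrc | hcr
  · refine ⟨q, ?_⟩
    rw [show n - q * t = r by omega, abs_of_nonneg hr0]
    nlinarith
  · refine ⟨q + 1, ?_⟩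
    rw [show n - ↑(q + 1) * t = -(t - r) by push_cast; linarith, abs_neg, abs_of_pos (by omega)]
    have hkey : (t - r) * (t + 1) ≤ c * (t - 1) := by
      have hrc : t - r ≤ t - c - 1 := by omega
      nlinarith [mul_le_mul_of_nonneg_right hrc (by omega : 0 ≤ t + 1)]
    push_cast
    nlinarith

theorem le_two_mul_ceil_half (t : ℤ) : t ≤ 2 * ⌈(t : ℚ) / 2⌉ := by
  have := Int.le_ceil ((t : ℚ) / 2)
  exact_mod_cast (by linarith : (t : ℚ) ≤ 2 * ⌈(t : ℚ) / 2⌉)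

/-- In `D(1,t)` with `t ≥ 2` and `j ≥ i`, we have `t·d(i,j) ≤ j - i + ⌈t/2⌉·(t - 1)`. -/
theorem distGraph_one_t_dist_le (t : ℤ) (ht : 2 ≤ t) (i j : ℤ) (hij : i ≤ j) :
    t * ((distGraph {1, t}).dist i j : ℤ) ≤ j - i + ⌈(t : ℚ) / 2⌉ * (t - 1) := by
  have htpos : 0 < t := by omega
  obtain ⟨a, ha⟩ :=
    exists_mul_add_abs_sub_le htpos (sub_nonneg.2 hij) (le_two_mul_ceil_half t)
  calc t * ((distGraph {1, t}).dist i j : ℤ)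
      ≤ t * (a + |j - (i + a * t)|) := by
        gcongr
        exact distGraph_one_dist_le htpos a i j
    _ = t * (a + |j - i - a * t|) := by rw [sub_add_eq_sub_sub]
    _ ≤ _ := ha
end

section
/- For any integers t ≥ 3 and k ≥ t/2, the radio k-labeling number of the infinite distance graph D(1,t) satisfies rl_k(D(1,t)) ≥ (t/2)k² - (t²/2 - t + 1/2)k + t³/8 - t²/2 + 3t/4 - 1/2. -/
/-- `c : ℤ → ℕ` is a radio `k`-labeling of the graph `G` on `ℤ`:
`|c(u) - c(v)| ≥ k + 1 - d(u,v)` for all distinct `u, v`. -/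
def IsRadioLabeling (G : SimpleGraph ℤ) (k : ℕ) (c : ℤ → ℕ) : Prop :=
  ∀ x y : ℤ, x ≠ y → (k : ℤ) + 1 - G.dist x y ≤ |(c x : ℤ) - c y|


namespace distGraph

variable {D : Set ℤ}

lemma adj_add_or_eq {d : ℤ} (hd : |d| ∈ D) (x : ℤ) : (distGraph D).Adj x (x + d) ∨ x = x + d := by
  by_cases h : d = 0
  · simp [h]
  · exact Or.inl ⟨by omega, by rwa [sub_add_cancel_left, abs_neg]⟩

lemma edist_add_natCast_mul_le {d : ℤ} (hd : |d| ∈ D) (x : ℤ) (j : ℕ) :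
    (distGraph D).edist x (x + j * d) ≤ j := by
  induction j with
  | zero => simp
  | succ j ih =>
    calc (distGraph D).edist x (x + ↑(j + 1) * d)
        ≤ (distGraph D).edist x (x + j * d) + (distGraph D).edist (x + j * d) (x + j * d + d) := by
          convert SimpleGraph.edist_triangle using 3; push_cast; ring
      _ ≤ j + 1 := add_le_add ih (SimpleGraph.edist_le_one_iff_adj_or_eq.mpr (adj_add_or_eq hd _))
      _ = ↑(j + 1) := by push_cast; rfl

lemma edist_add_mul_le {d : ℤ} (hd : |d| ∈ D) (x j : ℤ) :
    (distGraph D).edist x (x + j * d) ≤ j.natAbs := by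
  obtain ⟨n, rfl | rfl⟩ := Int.eq_nat_or_neg j
  · simpa using edist_add_natCast_mul_le hd x n
  · simpa [neg_mul, mul_neg] using edist_add_natCast_mul_le (d := -d) (by rwa [abs_neg]) x n

lemma dist_add_mul_add_mul_le {d e : ℤ} (hd : |d| ∈ D) (he : |e| ∈ D) (x a b : ℤ) :
    (distGraph D).dist x (x + a * d + b * e) ≤ a.natAbs + b.natAbs :=
  ENat.toNat_le_of_le_natCast <| SimpleGraph.edist_triangle.trans <| by
    push_cast; exact add_le_add (edist_add_mul_le hd x a) (edist_add_mul_le he _ b)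

/-- For `m = |x - y| = qt + r`, walk `q` long steps and `r` unit steps when `2r ≤ t + 1`,
and `q + 1` long steps and `t - r` unit steps back otherwise. -/
lemma two_mul_dist_le {t : ℕ} (ht : 0 < t) (x y : ℤ) :
    2 * t * ((distGraph {1, (t : ℤ)}).dist x y : ℤ) ≤ 2 * |x - y| + t ^ 2 - 1 := by
  wlog hxy : x ≤ y generalizing x y
  · rw [SimpleGraph.dist_comm, abs_sub_comm]; exact this y x (by omega)
  have hlong : |(t : ℤ)| ∈ ({1, (t : ℤ)} : Set ℤ) := by simp
  have hunit : |(1 : ℤ)| ∈ ({1, (t : ℤ)} : Set ℤ) := by simp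
  set q := (y - x) / t
  set r := (y - x) % t
  have hq : 0 ≤ q := Int.ediv_nonneg (by omega) (by omega)
  have hr : 0 ≤ r := Int.emod_nonneg _ (by omega)
  have hrt : r < t := Int.emod_lt_of_pos _ (by omega)
  have hqr : t * q + r = y - x := Int.mul_ediv_add_emod (y - x) t
  rw [abs_of_nonpos (by omega)]
  by_cases hsmall : 2 * r ≤ t + 1
  · have hd := dist_add_mul_add_mul_le hlong hunit x q r
    rw [show x + q * t + r * 1 = y by linarith] at hd
    have hd' : ((distGraph {1, (t : ℤ)}).dist x y : ℤ) ≤ q + r := by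
      zify at hd; rwa [abs_of_nonneg hq, abs_of_nonneg hr] at hd
    nlinarith
  · have hd := dist_add_mul_add_mul_le hlong hunit x (q + 1) (r - t)
    rw [show x + (q + 1) * t + (r - t) * 1 = y by linarith] at hd
    have hd' : ((distGraph {1, (t : ℤ)}).dist x y : ℤ) ≤ q + 1 + (t - r) := by
      zify at hd; rwa [abs_of_nonneg (by omega), abs_of_nonpos (by omega), neg_sub] at hd
    nlinarith

end distGraph

lemma sum_range_abs_sub_add_le (X : ℕ → ℤ) (a : ℤ) (n : ℕ) :
    ∑ i ∈ Finset.range n, |X (i + 1) - X i| + |X 0 - a| + |X n - a|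
      ≤ 2 * ∑ i ∈ Finset.range (n + 1), |X i - a| := by
  induction n with
  | zero => simp [two_mul]
  | succ n ih =>
    rw [Finset.sum_range_succ, Finset.sum_range_succ _ (n + 1)]
    have htriangle := abs_sub_le (X (n + 1)) a (X n)
    rw [abs_sub_comm a] at htriangle
    linarith

lemma sum_range_abs_sub_center (s : ℕ) :
    ∑ v ∈ Finset.range (2 * s + 1), |(v : ℤ) - s| = s * (s + 1) := by
  induction s with
  | zero => simp
  | succ s ih =>
    rw [show 2 * (s + 1) + 1 = 2 * s + 1 + 1 + 1 by ring, Finset.sum_range_succ,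
      Finset.sum_range_succ']
    have hshift : ∀ v ∈ Finset.range (2 * s + 1), |((v + 1 : ℕ) : ℤ) - ↑(s + 1)| = |(v : ℤ) - s| :=
      fun v _ => by push_cast; ring_nf
    rw [Finset.sum_congr rfl hshift, ih]
    push_cast
    rw [abs_of_nonpos (a := 0 - _) (by linarith), abs_of_nonneg (by linarith)]
    ring

lemma sum_abs_sub_le_of_bijOn {s : ℕ} (hs : 0 < s) {X : ℕ → ℕ}
    (hX : Set.BijOn X (Set.Iio (2 * s + 1)) (Set.Iio (2 * s + 1))) :
    ∑ i ∈ Finset.range (2 * s), |(X (i + 1) : ℤ) - X i| ≤ 2 * (s * (s + 1)) - 1 := by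
  have hcentre : ∑ i ∈ Finset.range (2 * s + 1), |(X i : ℤ) - s| = s * (s + 1) := by
    rw [← sum_range_abs_sub_center s]
    refine Finset.sum_nbij X (fun i hi => ?_) (by simpa using hX.injOn) (by simpa using hX.surjOn)
      (fun _ _ => rfl)
    simpa using hX.mapsTo (by simpa using hi)
  have hends : X 0 ≠ X (2 * s) := fun h => by
    have := hX.injOn (by simp) (by simp) h
    omega
  have hjumps := sum_range_abs_sub_add_le (fun i => (X i : ℤ)) s (2 * s)
  have htriangle := abs_sub_le (X 0 : ℤ) s (X (2 * s))
  rw [abs_sub_comm (s : ℤ)] at htriangle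
  have hgap : (1 : ℤ) ≤ |(X 0 : ℤ) - X (2 * s)| := Int.one_le_abs (by omega)
  linarith

lemma exists_bijOn_monotoneOn_comp {α : Type*} [LinearOrder α] (f : ℕ → α) (m : ℕ) :
    ∃ X : ℕ → ℕ, Set.BijOn X (Set.Iio m) (Set.Iio m) ∧ MonotoneOn (f ∘ X) (Set.Iio m) := by
  set σ := Tuple.sort fun j : Fin m => f j
  refine ⟨fun i => if h : i < m then σ ⟨i, h⟩ else i, ⟨fun i hi => ?_, fun i hi j hj hij => ?_,
    fun j hj => ⟨σ.symm ⟨j, hj⟩, ?_⟩⟩, fun i hi j hj hij => ?_⟩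
  · simp [Set.mem_Iio.mp hi]
  · simp only [Set.mem_Iio] at hi hj
    simp only [hi, hj, dif_pos] at hij
    simpa using σ.injective (Fin.ext hij)
  · simp
  · simp only [Set.mem_Iio] at hi hj
    simpa [hi, hj] using Tuple.monotone_sort (fun j : Fin m => f j) (Fin.mk_le_mk.mpr hij)

lemma IsRadioLabeling.sum_le_sub {G : SimpleGraph ℤ} {k : ℕ} {c : ℤ → ℕ}
    (hc : IsRadioLabeling G k c) (X : ℕ → ℤ) (n : ℕ) (hne : ∀ i < n, X i ≠ X (i + 1))
    (hmono : ∀ i < n, c (X i) ≤ c (X (i + 1))) :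
    ∑ i ∈ Finset.range n, ((k : ℤ) + 1 - G.dist (X i) (X (i + 1))) ≤ c (X n) - c (X 0) := by
  rw [← Finset.sum_range_sub (fun i => (c (X i) : ℤ))]
  refine Finset.sum_le_sum fun i hi => ?_
  have hi := Finset.mem_range.mp hi
  have := hc _ _ (hne i hi)
  rwa [abs_sub_comm, abs_of_nonneg (by simpa using hmono i hi)] at this

lemma IsRadioLabeling.exists_sub_ge_distGraph {t k s : ℕ} {c : ℤ → ℕ} (ht : 0 < t) (hs : 0 < s)
    (hc : IsRadioLabeling (distGraph {1, (t : ℤ)}) k c) :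
    ∃ x y : ℤ, 2 * s * (2 * t * k - (t - 1) ^ 2) - 4 * s ^ 2 + 2 ≤ 2 * t * ((c x : ℤ) - c y) := by
  obtain ⟨X, hbij, hmono⟩ := exists_bijOn_monotoneOn_comp (fun v : ℕ => c v) (2 * s + 1)
  have hspan := hc.sum_le_sub (fun i => X i) (2 * s)
    (fun i hi h => by
      have := hbij.injOn (x₁ := i) (x₂ := i + 1) (Set.mem_Iio.mpr (by omega))
        (Set.mem_Iio.mpr (by omega)) (by exact_mod_cast h)
      omega)
    (fun i hi => hmono (Set.mem_Iio.mpr (by omega)) (Set.mem_Iio.mpr (by omega)) (by omega))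
  have hdist := Finset.sum_le_sum fun i (_ : i ∈ Finset.range (2 * s)) =>
    distGraph.two_mul_dist_le ht (X i : ℤ) (X (i + 1))
  have hjump := sum_abs_sub_le_of_bijOn hs hbij
  refine ⟨X (2 * s), X 0, ?_⟩
  simp only [Finset.sum_sub_distrib, Finset.sum_add_distrib, Finset.sum_const, Finset.card_range,
    nsmul_eq_mul, ← Finset.mul_sum] at hspan hdist
  rw [Finset.sum_congr rfl fun i _ => abs_sub_comm (X i : ℤ) (X (i + 1))] at hdist
  push_cast at *
  linear_combination 2 * (t : ℤ) * hspan + hdist + 2 * hjump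

/-- For `t ≥ 3` and `k ≥ t/2`,
`rl_k(D(1,t)) ≥ (t/2)k² - (t²/2 - t + 1/2)k + t³/8 - t²/2 + 3t/4 - 1/2`. -/
theorem radio_lower_D1t_pair (t k : ℕ) (ht : 3 ≤ t) (hk : (t : ℝ) / 2 ≤ (k : ℝ)) (c : ℤ → ℕ)
    (hc : IsRadioLabeling (distGraph {1, (t : ℤ)}) k c) :
    ∃ x y : ℤ,
      ((t : ℝ) / 2) * (k : ℝ) ^ 2 - ((t : ℝ) ^ 2 / 2 - t + 1 / 2) * k
        + (t : ℝ) ^ 3 / 8 - (t : ℝ) ^ 2 / 2 + 3 * (t : ℝ) / 4 - 1 / 2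
      ≤ (c x : ℝ) - c y := by
  have hkt : (t : ℤ) ≤ 2 * k := by exact_mod_cast (by linarith : (t : ℝ) ≤ 2 * k)
  set u : ℤ := 2 * t * k - (t - 1) ^ 2 with hu
  have hu5 : 5 ≤ u := by nlinarith
  -- `4 (2su - 4s² + 2) - (u² - 1) = 9 - (4s - u)²`, so any `s` with `|4s - u| ≤ 3` will do.
  obtain ⟨s, hs, hsu⟩ : ∃ s : ℕ, 0 < s ∧ -1 ≤ 4 * (s : ℤ) - u ∧ 4 * (s : ℤ) - u ≤ 2 :=
    ⟨((u + 2) / 4).toNat, by omega, by omega, by omega⟩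
  obtain ⟨x, y, hxy⟩ := hc.exists_sub_ge_distGraph (by omega) hs
  refine ⟨x, y, ?_⟩
  have hint : u ^ 2 - 1 ≤ 8 * t * ((c x : ℤ) - c y) := by nlinarith
  have htarget : ((t : ℝ) / 2) * (k : ℝ) ^ 2 - ((t : ℝ) ^ 2 / 2 - t + 1 / 2) * k
      + (t : ℝ) ^ 3 / 8 - (t : ℝ) ^ 2 / 2 + 3 * (t : ℝ) / 4 - 1 / 2 = ((u : ℝ) ^ 2 - 1) / (8 * t) := by
    rw [hu]; push_cast; field_simp; ring
  rw [htarget, div_le_iff₀ (by positivity), mul_comm]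
  exact_mod_cast hint
end

section
/- Let t ≥ 2 be an integer and k an odd positive integer. Then the radio k-labeling number of the infinite distance graph D(1,2,...,t) satisfies rl_k(D(1,2,...,t)) ≤ (t/2)k² + (t/2)k. -/
/-! Label `x` by `m · σ(x mod p)` with `p = tk + 1`, `m = (k + 1)/2` and `σ` the perfect
(riffle) shuffle of `[0, p)`. Since `d(x, y) ≥ |x - y| / t`, it suffices to separate `x, y` by
more than `t (k - |c x - c y|)`. Equal labels only occur for `x ≡ y (mod p)`, i.e. `|x - y| > tk`;
labels differing by `m` come from residues about `p/2` apart, hence from `|x - y| > t (m - 1)`;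
and labels differing by `2m ≥ k + 1` need no separation at all. -/

section DistGraphIcc

variable {t : ℕ}

lemma hasse_le_distGraph_Icc (ht : 1 ≤ t) :
    SimpleGraph.hasse ℤ ≤ distGraph (Set.Icc 1 t) := by
  intro x y hxy
  rw [SimpleGraph.hasse_adj, Order.covBy_iff_add_one_eq, Order.covBy_iff_add_one_eq] at hxy
  refine ⟨fun h => by omega, ?_, ?_⟩ <;> rcases hxy with rfl | rfl <;> simp <;> omega

lemma distGraph_Icc_preconnected (ht : 1 ≤ t) : (distGraph (Set.Icc 1 t)).Preconnected :=
  fun x y => (SimpleGraph.hasse_preconnected_of_succ ℤ x y).mono (hasse_le_distGraph_Icc ht)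

lemma abs_sub_le_mul_length {x y : ℤ} (w : (distGraph (Set.Icc 1 t)).Walk x y) :
    |x - y| ≤ t * w.length := by
  induction w with
  | nil => simp
  | @cons u v z h w ih =>
    have hstep : |u - v| ≤ t := h.2.2
    push_cast [SimpleGraph.Walk.length_cons]
    linarith [abs_sub_le u v z]

lemma abs_sub_le_mul_dist (ht : 1 ≤ t) (x y : ℤ) :
    |x - y| ≤ t * (distGraph (Set.Icc 1 t)).dist x y := by
  obtain ⟨w, hw⟩ := (distGraph_Icc_preconnected ht x y).exists_walk_length_eq_dist
  exact hw ▸ abs_sub_le_mul_length w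

lemma isRadioLabeling_distGraph_Icc_of_lt (ht : 1 ≤ t) {k : ℕ} {c : ℤ → ℕ}
    (h : ∀ x y, x ≠ y → t * (k - |(c x : ℤ) - c y|) < |x - y|) :
    IsRadioLabeling (distGraph (Set.Icc 1 t)) k c := by
  intro x y hxy
  have hlt : (t : ℤ) * (k - |(c x : ℤ) - c y|) < t * (distGraph (Set.Icc 1 t)).dist x y :=
    (h x y hxy).trans_le (abs_sub_le_mul_dist ht x y)
  have := lt_of_mul_lt_mul_left hlt (by positivity)
  linarith

end DistGraphIcc

def riffle (p r : ℤ) : ℤ := if r < (p + 1) / 2 then 2 * r else 2 * (r - (p + 1) / 2) + 1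

lemma riffle_injective (p : ℤ) : Function.Injective (riffle p) := by
  intro r s h
  unfold riffle at h
  split_ifs at h <;> omega

lemma riffle_mapsTo_Ico (p : ℤ) : Set.MapsTo (riffle p) (Set.Ico 0 p) (Set.Ico 0 p) := by
  rintro r ⟨h0, hp⟩
  unfold riffle
  split_ifs <;> constructor <;> omega

lemma abs_sub_mem_of_abs_riffle_sub_eq_one {p r s : ℤ} (h : |riffle p r - riffle p s| = 1) :
    (p - 1) / 2 ≤ |r - s| ∧ |r - s| ≤ (p + 1) / 2 := by
  rcases abs_cases (riffle p r - riffle p s) with ⟨h', _⟩ | ⟨h', _⟩ <;>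
  rcases abs_cases (r - s) with ⟨hrs, _⟩ | ⟨hrs, _⟩ <;> rw [hrs] <;> rw [h'] at h <;>
    unfold riffle at h <;> split_ifs at h <;> omega

lemma le_abs_sub_of_emod_eq {p x y : ℤ} (hxy : x ≠ y) (h : x % p = y % p) : p ≤ |x - y| :=
  Int.le_of_dvd (abs_pos.2 (sub_ne_zero.2 hxy)) ((dvd_abs _ _).2 (Int.ModEq.dvd h.symm))

lemma le_abs_sub_of_le_abs_emod_sub {p B x y : ℤ} (hp : 0 < p) (h₁ : B ≤ |x % p - y % p|)
    (h₂ : |x % p - y % p| ≤ p - B) : B ≤ |x - y| := by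
  have hx := Int.emod_add_mul_ediv x p
  have hy := Int.emod_add_mul_ediv y p
  set e := x / p - y / p
  have hxy : x - y = (x % p - y % p) + p * e := by simp only [e]; linarith
  rcases lt_trichotomy e 0 with he | he | he
  · nlinarith [abs_le.1 h₂, le_abs_self (x - y), neg_abs_le (x - y)]
  · simpa [hxy, he] using h₁
  · nlinarith [abs_le.1 h₂, le_abs_self (x - y), neg_abs_le (x - y)]

/-- With `p = tk + 1` and `m = (k + 1) / 2` this is the labeling of the paper: steps of `k + 1`
through the first half of each period, then the same shifted by the half-step `m`. -/
def riffleLabel (p m : ℕ) (x : ℤ) : ℕ := (m * riffle p (x % p)).toNat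

section RiffleLabel

variable {p m : ℕ}

lemma riffle_emod_mem_Ico (hp : 0 < p) (x : ℤ) : riffle p (x % p) ∈ Set.Ico 0 (p : ℤ) :=
  riffle_mapsTo_Ico p ⟨Int.emod_nonneg x (by omega), Int.emod_lt_of_pos x (by omega)⟩

lemma cast_riffleLabel (hp : 0 < p) (x : ℤ) : (riffleLabel p m x : ℤ) = m * riffle p (x % p) :=
  Int.toNat_of_nonneg (mul_nonneg (Nat.cast_nonneg m) (riffle_emod_mem_Ico hp x).1)

lemma riffleLabel_le (hp : 0 < p) (x : ℤ) : riffleLabel p m x ≤ m * (p - 1) := by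
  have hx := (riffle_emod_mem_Ico hp x).2
  zify [hp]
  rw [cast_riffleLabel hp]
  exact mul_le_mul_of_nonneg_left (by omega) (Nat.cast_nonneg m)

theorem isRadioLabeling_riffleLabel {t k : ℕ} (ht : 1 ≤ t) (hp : t * k < p) (hm : k ≤ 2 * m)
    (hhalf : 2 * ((t : ℤ) * (k - m) + 1) < p) :
    IsRadioLabeling (distGraph (Set.Icc 1 t)) k (riffleLabel p m) := by
  have hp₀ : 0 < p := by omega
  refine isRadioLabeling_distGraph_Icc_of_lt ht fun x y hxy => ?_
  rw [cast_riffleLabel hp₀, cast_riffleLabel hp₀, ← mul_sub, abs_mul, Nat.abs_cast]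
  set δ := riffle p (x % p) - riffle p (y % p)
  obtain h0 | h1 | h2 : |δ| = 0 ∨ |δ| = 1 ∨ 2 ≤ |δ| := by have := abs_nonneg δ; omega
  · have hres : x % p = y % p := riffle_injective p (sub_eq_zero.1 (abs_eq_zero.1 h0))
    have := le_abs_sub_of_emod_eq hxy hres
    rw [h0]
    linarith
  · obtain ⟨hlo, hhi⟩ := abs_sub_mem_of_abs_riffle_sub_eq_one h1
    rw [h1, mul_one]
    have := le_abs_sub_of_le_abs_emod_sub (x := x) (y := y) (B := t * (k - m) + 1)
      (Int.natCast_pos.2 hp₀) (by omega) (by omega)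
    omega
  · have : (t : ℤ) * (k - m * |δ|) ≤ 0 :=
      mul_nonpos_of_nonneg_of_nonpos (Nat.cast_nonneg t) (by nlinarith)
    have := abs_pos.2 (sub_ne_zero.2 hxy)
    linarith

end RiffleLabel

theorem radio_upper_D1t_odd_general (t k : ℕ) (ht : 2 ≤ t) (hko : Odd k) :
    ∃ c : ℤ → ℕ, IsRadioLabeling (distGraph {d : ℤ | 1 ≤ d ∧ d ≤ (t : ℤ)}) k c ∧
      ∀ x : ℤ, (c x : ℝ) ≤ ((t : ℝ) / 2) * (k : ℝ) ^ 2 + ((t : ℝ) / 2) * k := by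
  obtain ⟨j, rfl⟩ := hko
  refine ⟨riffleLabel (t * (2 * j + 1) + 1) (j + 1),
    isRadioLabeling_riffleLabel (by omega) (Nat.lt_succ_self _) (by omega) ?_, fun x => ?_⟩
  · push_cast
    nlinarith
  · have := riffleLabel_le (m := j + 1) (by omega : 0 < t * (2 * j + 1) + 1) x
    rw [Nat.add_sub_cancel] at this
    calc (riffleLabel _ _ x : ℝ) ≤ ((j + 1) * (t * (2 * j + 1)) : ℕ) := by exact_mod_cast this
      _ = _ := by push_cast; ring

/-- For `t ≥ 2` and odd `k ≥ 1`, `rl_k(D(1,2,…,t)) ≤ (t/2)k² + (t/2)k`. -/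
theorem radio_upper_D1t_odd (t k : ℕ) (ht : 2 ≤ t) (hk : 1 ≤ k) (hko : Odd k) :
    ∃ c : ℤ → ℕ, IsRadioLabeling (distGraph {d : ℤ | 1 ≤ d ∧ d ≤ (t : ℤ)}) k c ∧
      ∀ x : ℤ, (c x : ℝ) ≤ ((t : ℝ) / 2) * (k : ℝ) ^ 2 + ((t : ℝ) / 2) * k :=
  radio_upper_D1t_odd_general t k ht hko
end

section
/- Let t ≥ 3 and k ≥ 1 both be odd integers. Then the radio k-labeling number of the infinite distance graph D(1,t) satisfies rl_k(D(1,t)) ≤ (t/2)k² - 1/2. -/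
/-!
Write `t = 2T + 1`, `k = 2K + 1` and `m = (tk + 1)/2`. A walk from `x` to `y` with net
number `B` of `t`-steps has length at least `|x - y - Bt| + |B|`; since
`|x - y| ≤ |x - y - Bt| + t|B|`, this gives `t · d(x, y) ≥ |x - y| + (t - 1)|x - y - Bt|`.
The labeling has period `2m = tk + 1`, and two vertices whose labels differ by less than `k` are
* congruent mod `2m`: then `|x - y| ≥ tk + 1`, so `d(x, y) ≥ k + 1`;
* congruent to `∓(m - 1)` mod `2m`, with label gap `K + 1`: then `|x - y| ≥ m - 1 > tK`;
* congruent to `∓m` mod `2m`, with label gap `K`: then either `|x - y| ≥ 3m`, or `|x - y| = m`,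
  which is `T + 1` mod `t`, so `x - y` is at distance `≥ T` from `tℤ` and the refined bound
  gives `d(x, y) ≥ K + 2`.
-/

theorem min_le_abs_of_modEq {n r D : ℤ} (hr : 0 ≤ r) (hrn : r ≤ n) (h : D ≡ r [ZMOD n]) :
    min r (n - r) ≤ |D| := by
  obtain ⟨q, hq⟩ := h.symm.dvd
  rcases le_or_gt 0 q with hq0 | hq0
  · exact (min_le_left _ _).trans (by nlinarith [le_abs_self D])
  · exact (min_le_right _ _).trans (by nlinarith [neg_abs_le D])

theorem abs_eq_or_three_mul_le_abs_of_modEq {m D : ℤ} (hm : 0 < m) (h : D ≡ m [ZMOD 2 * m]) :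
    |D| = m ∨ 3 * m ≤ |D| := by
  obtain ⟨q, hq⟩ := h.symm.dvd
  rcases (by omega : q ≤ -2 ∨ q = -1 ∨ q = 0 ∨ 1 ≤ q) with hq' | rfl | rfl | hq'
  · exact .inr (by nlinarith [neg_le_abs D])
  · exact .inl (by rw [show D = -m by linarith, abs_neg, abs_of_pos hm])
  · exact .inl (by rw [show D = m by linarith, abs_of_pos hm])
  · exact .inr (by nlinarith [le_abs_self D])

theorem distGraph_reachable {D : Set ℤ} (hD : 1 ∈ D) (x y : ℤ) :
    (distGraph D).Reachable x y := by
  have step : ∀ z : ℤ, (distGraph D).Reachable z (z + 1) := fun z =>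
    SimpleGraph.Adj.reachable ⟨by omega, by simpa using hD⟩
  suffices ∀ n : ℤ, (distGraph D).Reachable x (x + n) by simpa using this (y - x)
  intro n
  induction n using Int.induction_on with
  | zero => simp
  | succ n ih => exact ih.trans (by simpa [add_assoc] using step (x + n))
  | pred n ih =>
    exact ih.trans (by simpa [sub_eq_add_neg, add_assoc] using (step (x + (-n - 1))).symm)

theorem distGraph_exists_le_length {t x y : ℤ} (w : (distGraph {1, t}).Walk x y) :
    ∃ B : ℤ, |x - y - B * t| + |B| ≤ w.length := by
  induction w with
  | nil => exact ⟨0, by simp⟩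
  | @cons u v z h w ih =>
    obtain ⟨B, hB⟩ := ih
    rw [SimpleGraph.Walk.length_cons, Nat.cast_succ]
    obtain ⟨-, h1 | ht⟩ := h
    · refine ⟨B, ?_⟩
      have := abs_add_le (u - v) (v - z - B * t)
      rw [show u - v + (v - z - B * t) = u - z - B * t by ring, h1] at this
      linarith
    · rcases eq_or_eq_neg_of_abs_eq ht with ht | ht
      · refine ⟨B + 1, ?_⟩
        have := abs_add_le B 1
        rw [show u - z - (B + 1) * t = v - z - B * t by linear_combination ht, abs_one] at *
        linarith
      · refine ⟨B - 1, ?_⟩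
        have := abs_sub B 1
        rw [show u - z - (B - 1) * t = v - z - B * t by linear_combination ht, abs_one] at *
        linarith

theorem distGraph_abs_add_mul_le_mul_dist {t a x y : ℤ} (ht : 1 ≤ t)
    (ha : ∀ B : ℤ, a ≤ |x - y - B * t|) :
    |x - y| + (t - 1) * a ≤ t * (distGraph {1, t}).dist x y := by
  obtain ⟨w, hw⟩ := (distGraph_reachable (Set.mem_insert 1 {t}) x y).exists_walk_length_eq_dist
  obtain ⟨B, hB⟩ := distGraph_exists_le_length w
  have htri : |x - y| ≤ |x - y - B * t| + |B| * t := by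
    calc |x - y| = |(x - y - B * t) + B * t| := by rw [sub_add_cancel]
      _ ≤ |x - y - B * t| + |B * t| := abs_add_le _ _
      _ = |x - y - B * t| + |B| * t := by rw [abs_mul, abs_of_pos (by omega : 0 < t)]
  rw [← hw]
  nlinarith [mul_le_mul_of_nonneg_left hB (by omega : 0 ≤ t),
    mul_le_mul_of_nonneg_left (ha B) (by omega : 0 ≤ t - 1)]

theorem distGraph_lt_dist_of_mul_lt {t a n x y : ℤ} (ht : 1 ≤ t)
    (ha : ∀ B : ℤ, a ≤ |x - y - B * t|) (h : t * n < |x - y| + (t - 1) * a) :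
    n < (distGraph {1, t}).dist x y :=
  lt_of_mul_lt_mul_left (h.trans_le (distGraph_abs_add_mul_le_mul_dist ht ha)) (by omega)

theorem distGraph_lt_dist_of_mul_lt_abs {t n x y : ℤ} (ht : 1 ≤ t) (h : t * n < |x - y|) :
    n < (distGraph {1, t}).dist x y :=
  distGraph_lt_dist_of_mul_lt (a := 0) ht (fun _ => abs_nonneg _) (by simpa using h)

theorem distGraph_lt_dist_of_modEq {t k x y : ℤ} (ht : 1 ≤ t) (hxy : x ≠ y)
    (h : x ≡ y [ZMOD t * k + 1]) : k < (distGraph {1, t}).dist x y := by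
  refine distGraph_lt_dist_of_mul_lt_abs ht ?_
  have := Int.le_of_dvd (abs_pos.mpr (sub_ne_zero.mpr hxy)) ((dvd_abs _ _).mpr h.symm.dvd)
  omega

theorem distGraph_lt_dist_of_modEq_neg_pred {T K m x y : ℤ} (hT : 1 ≤ T) (hK : 0 ≤ K)
    (hm : m = (2 * T + 1) * K + T + 1) (h : x - y ≡ -(m - 1) [ZMOD 2 * m]) :
    K < (distGraph {1, 2 * T + 1}).dist x y := by
  have hm0 : 0 < m := by nlinarith
  have hyx : y - x ≡ m - 1 [ZMOD 2 * m] := by simpa using h.neg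
  have := min_le_abs_of_modEq (by omega) (by omega) hyx
  rw [abs_sub_comm, min_eq_left (by omega)] at this
  exact distGraph_lt_dist_of_mul_lt_abs (by omega) (by nlinarith)

theorem distGraph_lt_dist_of_modEq_neg {T K m x y : ℤ} (hT : 1 ≤ T) (hK : 0 ≤ K)
    (hm : m = (2 * T + 1) * K + T + 1) (h : x - y ≡ -m [ZMOD 2 * m]) :
    K + 1 < (distGraph {1, 2 * T + 1}).dist x y := by
  have hm0 : 0 < m := by nlinarith
  have h' : x - y ≡ m [ZMOD 2 * m] := h.trans (Int.modEq_iff_dvd.mpr ⟨1, by ring⟩)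
  rcases abs_eq_or_three_mul_le_abs_of_modEq hm0 h' with hD | hD
  · -- `m ≡ T + 1 (mod 2T + 1)`, so `±m` stays at distance `≥ T` from the multiples of `t`
    have far : ∀ B : ℤ, T ≤ |x - y - B * (2 * T + 1)| := by
      intro B
      have key : ∀ B' : ℤ, T ≤ |m - B' * (2 * T + 1)| := fun B' => by
        have hB' : m - B' * (2 * T + 1) ≡ T + 1 [ZMOD 2 * T + 1] :=
          Int.modEq_iff_dvd.mpr ⟨B' - K, by rw [hm]; ring⟩
        have := min_le_abs_of_modEq (by omega) (by omega) hB'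
        rw [min_eq_right (by omega)] at this
        linarith
      rcases eq_or_eq_neg_of_abs_eq hD with hD | hD
      · rw [hD]
        exact key B
      · rw [hD, show -m - B * (2 * T + 1) = -(m - -B * (2 * T + 1)) by ring, abs_neg]
        exact key (-B)
    exact distGraph_lt_dist_of_mul_lt (by omega) far (by rw [hD, hm]; nlinarith)
  · exact distGraph_lt_dist_of_mul_lt_abs (by omega) (by nlinarith)

/-- The paper's labeling, for `2m = tk + 1` and `K = (k - 1)/2`: the residue `r` of `z` mod `2m`
is the paper's position `r + 1`. -/
def pairLabel (m k K z : ℤ) : ℤ :=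
  if z % (2 * m) < m then z % (2 * m) * k else K + (z % (2 * m) - m) * k

section pairLabel

variable {m k K z : ℤ}

theorem pairLabel_of_lt (h : z % (2 * m) < m) : pairLabel m k K z = z % (2 * m) * k :=
  if_pos h

theorem pairLabel_of_le (h : m ≤ z % (2 * m)) :
    pairLabel m k K z = K + (z % (2 * m) - m) * k :=
  if_neg (not_lt.mpr h)

theorem pairLabel_nonneg (hm : 0 < m) (hk : 0 ≤ k) (hK : 0 ≤ K) : 0 ≤ pairLabel m k K z := by
  have hz : 0 ≤ z % (2 * m) := Int.emod_nonneg z (by omega)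
  by_cases h : z % (2 * m) < m
  · rw [pairLabel_of_lt h]
    positivity
  · rw [pairLabel_of_le (not_lt.mp h)]
    nlinarith

theorem pairLabel_le (hm : 0 < m) (hk : 0 ≤ k) (hK : 0 ≤ K) :
    pairLabel m k K z ≤ K + (m - 1) * k := by
  have hz : z % (2 * m) < 2 * m := Int.emod_lt_of_pos z (by omega)
  by_cases h : z % (2 * m) < m
  · rw [pairLabel_of_lt h]
    nlinarith
  · rw [pairLabel_of_le (not_lt.mp h)]
    nlinarith

end pairLabel

section radio

variable {T K m x y : ℤ}

theorem pairLabel_radio_of_same_half (hT : 1 ≤ T) (hK : 0 ≤ K)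
    (hm : m = (2 * T + 1) * K + T + 1) (hxy : x ≠ y) (h : x % (2 * m) < m ↔ y % (2 * m) < m) :
    2 * K + 1 + 1 - (distGraph {1, 2 * T + 1}).dist x y ≤
      |pairLabel m (2 * K + 1) K x - pairLabel m (2 * K + 1) K y| := by
  have hdiff : pairLabel m (2 * K + 1) K x - pairLabel m (2 * K + 1) K y =
      (x % (2 * m) - y % (2 * m)) * (2 * K + 1) := by
    by_cases hx : x % (2 * m) < m
    · rw [pairLabel_of_lt hx, pairLabel_of_lt (h.mp hx)]
      ring
    · rw [pairLabel_of_le (not_lt.mp hx), pairLabel_of_le (not_lt.mp (h.not.mp hx))]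
      ring
  rw [hdiff, abs_mul, abs_of_pos (by omega : 0 < 2 * K + 1)]
  rcases eq_or_ne (x % (2 * m)) (y % (2 * m)) with hxy' | hxy'
  · have hper : 2 * m = (2 * T + 1) * (2 * K + 1) + 1 := by rw [hm]; ring
    have := distGraph_lt_dist_of_modEq (k := 2 * K + 1) (by omega) hxy (hper ▸ hxy')
    rw [hxy', sub_self, abs_zero, zero_mul]
    omega
  · have h1 := Int.one_le_abs (sub_ne_zero.mpr hxy')
    have h2 := (distGraph_reachable (Set.mem_insert 1 {2 * T + 1}) x y).pos_dist_of_ne hxy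
    nlinarith

theorem pairLabel_radio_of_lt_of_le (hT : 1 ≤ T) (hK : 0 ≤ K)
    (hm : m = (2 * T + 1) * K + T + 1) (hxy : x ≠ y) (hx : x % (2 * m) < m)
    (hy : m ≤ y % (2 * m)) :
    2 * K + 1 + 1 - (distGraph {1, 2 * T + 1}).dist x y ≤
      |pairLabel m (2 * K + 1) K x - pairLabel m (2 * K + 1) K y| := by
  obtain ⟨j, hj⟩ : ∃ j, y % (2 * m) = x % (2 * m) + m + j := ⟨_, (add_sub_cancel _ _).symm⟩
  have hdiff : pairLabel m (2 * K + 1) K x - pairLabel m (2 * K + 1) K y =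
      -(j * (2 * K + 1) + K) := by
    rw [pairLabel_of_lt hx, pairLabel_of_le hy, hj]
    ring
  have hmod : x - y ≡ -(m + j) [ZMOD 2 * m] := by
    have := (Int.mod_modEq x (2 * m)).sub (Int.mod_modEq y (2 * m))
    rw [hj, show x % (2 * m) - (x % (2 * m) + m + j) = -(m + j) by ring] at this
    exact this.symm
  have hdist := (distGraph_reachable (Set.mem_insert 1 {2 * T + 1}) x y).pos_dist_of_ne hxy
  rw [hdiff]
  rcases (by omega : j ≤ -2 ∨ j = -1 ∨ j = 0 ∨ 1 ≤ j) with hj' | rfl | rfl | hj'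
  · nlinarith [le_abs_self (-(j * (2 * K + 1) + K))]
  · have := distGraph_lt_dist_of_modEq_neg_pred hT hK hm (by convert hmod using 2; ring)
    rw [show -(-1 * (2 * K + 1) + K) = K + 1 by ring, abs_of_nonneg (by omega)]
    omega
  · have := distGraph_lt_dist_of_modEq_neg hT hK hm (by simpa using hmod)
    rw [show -(0 * (2 * K + 1) + K) = -K by ring, abs_neg, abs_of_nonneg hK]
    omega
  · nlinarith [neg_abs_le (-(j * (2 * K + 1) + K))]

theorem pairLabel_radio (hT : 1 ≤ T) (hK : 0 ≤ K) (hm : m = (2 * T + 1) * K + T + 1)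
    (hxy : x ≠ y) :
    2 * K + 1 + 1 - (distGraph {1, 2 * T + 1}).dist x y ≤
      |pairLabel m (2 * K + 1) K x - pairLabel m (2 * K + 1) K y| := by
  by_cases hx : x % (2 * m) < m <;> by_cases hy : y % (2 * m) < m
  · exact pairLabel_radio_of_same_half hT hK hm hxy (iff_of_true hx hy)
  · exact pairLabel_radio_of_lt_of_le hT hK hm hxy hx (not_lt.mp hy)
  · rw [SimpleGraph.dist_comm, abs_sub_comm]
    exact pairLabel_radio_of_lt_of_le hT hK hm hxy.symm hy (not_lt.mp hx)
  · exact pairLabel_radio_of_same_half hT hK hm hxy (iff_of_false hx hy)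

end radio

theorem radio_upper_D1t_pair_odd_general (t k : ℕ) (ht : 3 ≤ t) (hto : Odd t)
    (hko : Odd k) :
    ∃ c : ℤ → ℕ, IsRadioLabeling (distGraph {1, (t : ℤ)}) k c ∧
      ∀ x : ℤ, (c x : ℝ) ≤ ((t : ℝ) / 2) * (k : ℝ) ^ 2 - 1 / 2 := by
  obtain ⟨T, rfl⟩ := hto
  obtain ⟨K, rfl⟩ := hko
  have hT : (1 : ℤ) ≤ T := by omega
  have hK : (0 : ℤ) ≤ K := K.cast_nonneg
  set m : ℤ := (2 * T + 1) * K + T + 1 with hm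
  have hm0 : 0 < m := by positivity
  have hc (z : ℤ) : ((pairLabel m (2 * K + 1) K z).toNat : ℤ) = pairLabel m (2 * K + 1) K z :=
    Int.toNat_of_nonneg (pairLabel_nonneg hm0 (by omega) hK)
  refine ⟨fun z => (pairLabel m (2 * K + 1) K z).toNat, fun x y hxy => ?_, fun z => ?_⟩
  · rw [hc, hc]
    push_cast
    exact pairLabel_radio hT hK hm hxy
  · have hle : 2 * ((pairLabel m (2 * K + 1) K z).toNat : ℤ) ≤
        (2 * T + 1) * (2 * K + 1) ^ 2 - 1 := by
      rw [hc]
      nlinarith [pairLabel_le (z := z) hm0 (by omega : (0 : ℤ) ≤ 2 * K + 1) hK]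
    have hleℝ : 2 * ((pairLabel m (2 * K + 1) K z).toNat : ℝ) ≤
        (2 * T + 1) * (2 * K + 1) ^ 2 - 1 := by
      exact_mod_cast hle
    push_cast
    linarith

/-- For odd `t ≥ 3` and odd `k ≥ 1`, `rl_k(D(1,t)) ≤ (t/2)k² - 1/2`. -/
theorem radio_upper_D1t_pair_odd (t k : ℕ) (ht : 3 ≤ t) (hto : Odd t)
    (hk : 1 ≤ k) (hko : Odd k) :
    ∃ c : ℤ → ℕ, IsRadioLabeling (distGraph {1, (t : ℤ)}) k c ∧
      ∀ x : ℤ, (c x : ℝ) ≤ ((t : ℝ) / 2) * (k : ℝ) ^ 2 - 1 / 2 :=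
  radio_upper_D1t_pair_odd_general t k ht hto hko
end
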